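/- Let g be any finite-dimensional real semisimple Lie algebra and set d = dim g. Then the direct product Lie algebra g ⊕ ℝ^d carries a nondegenerate symmetric bilinear form B of split signature (d,d) such that its Lie bracket is in the null cone of the O(B)-action. -/

import Mathlib

/-- The isometry group `O(B)` of a bilinear form `B`. -/
def IsometryGrp {V : Type*} [AddCommGroup V] [Module ℝ V]
    (B : LinearMap.BilinForm ℝ V) : Set (V ≃ₗ[ℝ] V) :=
  {A | ∀ x y, B (A x) (A y) = B x y}

/-- `μ` is in the null cone of the `O(B)`-action: `0` lies in the closure of the orbit
`O(B)·μ`, `(A·μ)(x,y) = A⁻¹(μ(Ax,Ay))`, in the topology of pointwise convergence. -/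
def InNullCone {V : Type*} [AddCommGroup V] [Module ℝ V] [TopologicalSpace V]
    (B : LinearMap.BilinForm ℝ V) (μ : V → V → V) : Prop :=
  (0 : V → V → V) ∈
    closure {f : V → V → V | ∃ A ∈ IsometryGrp B, f = fun x y => A.symm (μ (A x) (A y))}

/-- `B` has signature `(p,q)`: it is represented in some basis by the diagonal matrix with
`p` entries `+1` and `q` entries `-1`. -/
def HasSignature {V : Type*} [AddCommGroup V] [Module ℝ V]
    (B : LinearMap.BilinForm ℝ V) (p q : ℕ) : Prop :=
  ∃ b : Module.Basis (Fin p ⊕ Fin q) ℝ V, ∀ i j, B (b i) (b j) =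
    if i = j then Sum.elim (fun _ => (1 : ℝ)) (fun _ => (-1 : ℝ)) i else 0

/-!
Identify `ℝ^d` with the dual of `g` through a basis, and let `B` be the hyperbolic form
`B((x, u), (y, v)) = u(y) + v(x)` on `g × g*`, which has split signature. For `s ≠ 0` the map
`(x, u) ↦ (s x, s⁻¹ u)` is a `B`-isometry, and conjugating the bracket by it multiplies the
bracket by `s`; letting `s → 0` puts `0` in the closure of the orbit.
-/

open Module

theorem hasSignature_of_gram_eq {V : Type*} [AddCommGroup V] [Module ℝ V]
    [FiniteDimensional ℝ V] (B : LinearMap.BilinForm ℝ V) {p q : ℕ} (v : Fin p ⊕ Fin q → V)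
    (hv : ∀ i j, B (v i) (v j) =
      if i = j then Sum.elim (fun _ => (1 : ℝ)) (fun _ => (-1 : ℝ)) i else 0)
    (hdim : finrank ℝ V = p + q) :
    HasSignature B p q := by
  have hind : LinearIndependent ℝ v := by
    refine LinearMap.BilinForm.linearIndependent_of_iIsOrtho (B := B)
      (fun i j hij => ?_) fun i => ?_
    · exact (hv i j).trans (if_neg hij)
    · rcases i with i | i <;> simp [hv]
  have hcard : Fintype.card (Fin p ⊕ Fin q) = finrank ℝ V := by simp [hdim]
  exact ⟨basisOfLinearIndependentOfCardEqFinrank' v hind hcard, by simpa using hv⟩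

section Hyperbolic

variable {V W : Type*} [AddCommGroup V] [Module ℝ V] [AddCommGroup W] [Module ℝ W]

def hyperbolicForm (P : V →ₗ[ℝ] W →ₗ[ℝ] ℝ) : LinearMap.BilinForm ℝ (V × W) :=
  P.compl₁₂ (LinearMap.fst ℝ V W) (LinearMap.snd ℝ V W) +
    (P.compl₁₂ (LinearMap.fst ℝ V W) (LinearMap.snd ℝ V W)).flip

@[simp]
theorem hyperbolicForm_apply (P : V →ₗ[ℝ] W →ₗ[ℝ] ℝ) (a b : V × W) :
    hyperbolicForm P a b = P a.1 b.2 + P b.1 a.2 :=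
  rfl

theorem hasSignature_hyperbolicForm {n : ℕ} (P : V →ₗ[ℝ] W →ₗ[ℝ] ℝ)
    (bV : Basis (Fin n) ℝ V) (bW : Basis (Fin n) ℝ W)
    (hP : ∀ i j, P (bV i) (bW j) = if i = j then 1 else 0) :
    HasSignature (hyperbolicForm P) n n := by
  have := Finite.of_basis bV
  have := Finite.of_basis bW
  refine hasSignature_of_gram_eq _
    (Sum.elim (fun i => (bV i, (1 / 2 : ℝ) • bW i)) (fun i => (bV i, -(1 / 2 : ℝ) • bW i)))
    ?_ (by simp [finrank_eq_card_basis bV, finrank_eq_card_basis bW])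
  rintro (i | i) (j | j) <;> by_cases hij : i = j <;> simp [hP, hij, eq_comm] <;> norm_num

noncomputable def hyperbolicScaling (V W : Type*) [AddCommGroup V] [Module ℝ V]
    [AddCommGroup W] [Module ℝ W] {s : ℝ} (hs : s ≠ 0) : (V × W) ≃ₗ[ℝ] (V × W) :=
  (LinearEquiv.smulOfNeZero ℝ V s hs).prodCongr
    (LinearEquiv.smulOfNeZero ℝ W s⁻¹ (inv_ne_zero hs))

@[simp]
theorem hyperbolicScaling_apply {s : ℝ} (hs : s ≠ 0) (a : V × W) :
    hyperbolicScaling V W hs a = (s • a.1, s⁻¹ • a.2) :=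
  rfl

theorem hyperbolicScaling_mem_isometryGrp (P : V →ₗ[ℝ] W →ₗ[ℝ] ℝ) {s : ℝ} (hs : s ≠ 0) :
    hyperbolicScaling V W hs ∈ IsometryGrp (hyperbolicForm P) := by
  intro a b
  simp [hs]

end Hyperbolic

theorem hyperbolicScaling_conj_bracket (L W : Type*) [LieRing L] [LieAlgebra ℝ L]
    [AddCommGroup W] [Module ℝ W] {s : ℝ} (hs : s ≠ 0) :
    (fun a b => (hyperbolicScaling L W hs).symm
      (⁅(hyperbolicScaling L W hs a).1, (hyperbolicScaling L W hs b).1⁆, 0)) =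
      s • fun a b : L × W => (⁅a.1, b.1⁆, (0 : W)) := by
  funext a b
  rw [LinearEquiv.symm_apply_eq]
  simp [smul_smul, smul_lie, lie_smul]

theorem inNullCone_of_smul_mem_orbit {V : Type*} [AddCommGroup V] [Module ℝ V]
    [TopologicalSpace V] [ContinuousSMul ℝ V] (B : LinearMap.BilinForm ℝ V) (μ : V → V → V)
    (h : ∀ s : ℝ, s ≠ 0 → ∃ A ∈ IsometryGrp B, s • μ = fun x y => A.symm (μ (A x) (A y))) :
    InNullCone B μ := by
  have hlim : Filter.Tendsto (fun s : ℝ => s • μ) (nhds 0) (nhds 0) := by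
    simpa using (Filter.tendsto_id (x := nhds (0 : ℝ))).smul_const μ
  exact mem_closure_of_tendsto (hlim.mono_left nhdsWithin_le_nhds)
    (eventually_nhdsWithin_of_forall (s := {0}ᶜ) h)

theorem semisimple_sum_full_abelian_in_null_cone_general
    (g : Type) [LieRing g] [LieAlgebra ℝ g] [FiniteDimensional ℝ g]
    [TopologicalSpace g] [ContinuousSMul ℝ g]
    (d : ℕ) (hd : d = Module.finrank ℝ g) :
    ∃ B : LinearMap.BilinForm ℝ (g × (Fin d → ℝ)),
      HasSignature B d d ∧ InNullCone B (fun a b => (⁅a.1, b.1⁆, 0)) := by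
  subst hd
  let b := finBasis ℝ g
  let P : g →ₗ[ℝ] (Fin (finrank ℝ g) → ℝ) →ₗ[ℝ] ℝ :=
    (dotProductBilin ℝ ℝ).comp b.equivFun.toLinearMap
  have hP : ∀ i j, P (b i) (Pi.basisFun ℝ _ j) = if i = j then 1 else 0 := fun i j => by
    simp [P, Finsupp.single_apply]
  refine ⟨hyperbolicForm P, hasSignature_hyperbolicForm P b (Pi.basisFun ℝ _) hP,
    inNullCone_of_smul_mem_orbit _ _ fun s hs => ?_⟩
  exact ⟨_, hyperbolicScaling_mem_isometryGrp P hs,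
    (hyperbolicScaling_conj_bracket g _ hs).symm⟩

/-- For every finite-dimensional real semisimple Lie algebra `g` with `d = dim g`, the
direct product Lie algebra `g ⊕ ℝ^d` (with `ℝ^d` abelian, bracket
`((x,u),(y,v)) ↦ (⁅x,y⁆, 0)`) carries a nondegenerate symmetric bilinear form of split
signature `(d,d)` whose Lie bracket is in the null cone of the `O(B)`-action. -/
theorem semisimple_sum_full_abelian_in_null_cone
    (g : Type) [LieRing g] [LieAlgebra ℝ g] [FiniteDimensional ℝ g]
    [TopologicalSpace g] [IsTopologicalAddGroup g] [ContinuousSMul ℝ g] [T2Space g]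
    [LieAlgebra.IsSemisimple ℝ g]
    (d : ℕ) (hd : d = Module.finrank ℝ g) :
    ∃ B : LinearMap.BilinForm ℝ (g × (Fin d → ℝ)),
      HasSignature B d d ∧ InNullCone B (fun a b => (⁅a.1, b.1⁆, 0)) :=
  semisimple_sum_full_abelian_in_null_cone_general g d hd
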